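/- The function f : ℝ² → ℝ defined by f(x,y) = sin(1/x) for x > 0 and f(x,y) = 1 for x ≤ 0 is Fσ-measurable: the preimage of every open subset of ℝ is an Fσ subset of ℝ². -/

import Mathlib

/-- A set is Fσ if it is a countable union of closed sets. -/
def IsFsigma {X : Type*} [TopologicalSpace X] (s : Set X) : Prop :=
  ∃ F : ℕ → Set X, (∀ n, IsClosed (F n)) ∧ s = ⋃ n, F n

/-!
On the open half-plane `x > 0` the function is continuous, and on its closed complement it is
constant, so the preimage of an open set is an open set together with a relatively open subset
of a closed set. In a perfectly normal space such as ℝ² open sets are Fσ, and an Fσ set stays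
Fσ under intersection with a closed set.
-/

open Set

section IsFsigma

variable {X : Type*} [TopologicalSpace X] {s t : Set X}

theorem IsFsigma.union (hs : IsFsigma s) (ht : IsFsigma t) : IsFsigma (s ∪ t) := by
  obtain ⟨F, hF, rfl⟩ := hs
  obtain ⟨G, hG, rfl⟩ := ht
  exact ⟨fun n => F n ∪ G n, fun n => (hF n).union (hG n), iUnion_union_distrib F G |>.symm⟩

theorem IsFsigma.inter_isClosed (hs : IsFsigma s) (ht : IsClosed t) : IsFsigma (s ∩ t) := by
  obtain ⟨F, hF, rfl⟩ := hs
  exact ⟨fun n => F n ∩ t, fun n => (hF n).inter ht, iUnion_inter t F⟩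

theorem IsOpen.isFsigma [PerfectlyNormalSpace X] (hs : IsOpen s) : IsFsigma s := by
  obtain ⟨G, hG, hsc⟩ := isGδ_iff_eq_iInter_nat.1 hs.isClosed_compl.isGδ
  refine ⟨fun n => (G n)ᶜ, fun n => (hG n).isClosed_compl, ?_⟩
  rw [← compl_iInter, ← hsc, compl_compl]

theorem ContinuousOn.isFsigma_preimage_of_continuousOn_compl [PerfectlyNormalSpace X]
    {Y : Type*} [TopologicalSpace Y] {f : X → Y} {A : Set X} {V : Set Y}
    (hfA : ContinuousOn f A) (hA : IsOpen A) (hfAc : ContinuousOn f Aᶜ) (hV : IsOpen V) :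
    IsFsigma (f ⁻¹' V) := by
  have hopen : IsOpen (A ∩ f ⁻¹' V) := hfA.isOpen_inter_preimage hA hV
  obtain ⟨u, hu, hVAc⟩ := continuousOn_iff'.1 hfAc V hV
  have hsplit : f ⁻¹' V = (A ∩ f ⁻¹' V) ∪ (u ∩ Aᶜ) := by
    rw [← hVAc, inter_comm, inter_union_compl]
  rw [hsplit]
  exact hopen.isFsigma.union (hu.isFsigma.inter_isClosed hA.isClosed_compl)

end IsFsigma

theorem stmt12 (f : ℝ × ℝ → ℝ)
    (hf : ∀ p : ℝ × ℝ, f p = if p.1 > 0 then Real.sin (1 / p.1) else 1) :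
    ∀ V : Set ℝ, IsOpen V → IsFsigma (f ⁻¹' V) := by
  intro V hV
  let A : Set (ℝ × ℝ) := {p | 0 < p.1}
  have hA : IsOpen A := isOpen_lt continuous_const continuous_fst
  have hsin : ContinuousOn (fun p : ℝ × ℝ => Real.sin (1 / p.1)) A :=
    Real.continuous_sin.comp_continuousOn
      (continuousOn_const.div continuous_fst.continuousOn fun _ hp => ne_of_gt hp)
  have hfA : ContinuousOn f A := hsin.congr fun p (hp : 0 < p.1) => by simp [hf p, hp]
  have hfAc : ContinuousOn f Aᶜ :=
    (continuousOn_const (c := (1 : ℝ))).congr fun p (hp : ¬0 < p.1) => by simp [hf p, hp]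
  exact hfA.isFsigma_preimage_of_continuousOn_compl hA hfAc hV
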